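/- Let g : ℝ² → ℝ be a smooth compactly supported function and c := exp∘g. Then ∫_{ℝ²} c⁻³ |∇c|⁴ dx ≤ 25 ∫_{ℝ²} c |D²(ln c)|² dx. -/

import Mathlib

open MeasureTheory Real

noncomputable section

/-- The plane `ℝ²` as a Euclidean space. -/
abbrev E2 : Type := EuclideanSpace ℝ (Fin 2)

/-- `i`-th partial derivative of a scalar function on `ℝ²`. -/
def pd (i : Fin 2) (f : E2 → ℝ) (x : E2) : ℝ :=
  fderiv ℝ f x (EuclideanSpace.single i 1)

/-- Laplacian `Δf = ∑ i, ∂_i ∂_i f`. -/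
def lap (f : E2 → ℝ) (x : E2) : ℝ := ∑ i, pd i (pd i f) x

/-- `|∇f|² = ∑ i, (∂_i f)²`. -/
def gradSq (f : E2 → ℝ) (x : E2) : ℝ := ∑ i, (pd i f x) ^ 2

/-- Squared Frobenius norm of the Hessian: `|D²f|² = ∑ i j, (∂²_{ij} f)²`. -/
def hessSq (f : E2 → ℝ) (x : E2) : ℝ := ∑ i, ∑ j, (pd i (pd j f) x) ^ 2

/-- `⟨D²f ∇f, ∇f⟩ = ∑ i j, (∂²_{ij} f)(∂_i f)(∂_j f)`. -/
def hessGrad (f : E2 → ℝ) (x : E2) : ℝ :=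
  ∑ i, ∑ j, pd i (pd j f) x * pd i f x * pd j f x

end

/-!
Write `Q = |∇g|²`. Since `c = e^g`, the left-hand integrand is `e^g Q²` and `D² ln c = D²g`.
The function `e^g (Q² + Δg Q + 2 ⟨D²g ∇g, ∇g⟩)` is the divergence of the compactly supported
field `e^g Q ∇g`, so it integrates to zero. Pointwise, `(Δg)² ≤ 2 |D²g|²` and
`⟨D²g ∇g, ∇g⟩² ≤ |D²g|² Q²` (Cauchy–Schwarz), so by AM–GM that divergence is at least
`(2/5) Q² - 5 |D²g|²`; multiplying by `e^g` and integrating gives the bound with constant `25/2`.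
-/

section

variable {f h : E2 → ℝ} {x : E2} {i : Fin 2} {m n : WithTop ℕ∞}

lemma contDiff_pd (hf : ContDiff ℝ n f) (hmn : m + 1 ≤ n) : ContDiff ℝ m (pd i f) :=
  (hf.fderiv_right hmn).clm_apply contDiff_const

lemma tsupport_pd_subset : tsupport (pd i f) ⊆ tsupport f :=
  tsupport_fderiv_apply_subset ℝ _

lemma pd_eq_zero_of_notMem_tsupport (hx : x ∉ tsupport f) : pd i f x = 0 :=
  image_eq_zero_of_notMem_tsupport fun hmem => hx (tsupport_pd_subset hmem)

lemma pd_mul (hf : DifferentiableAt ℝ f x) (hh : DifferentiableAt ℝ h x) :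
    pd i (fun y => f y * h y) x = pd i f x * h x + f x * pd i h x := by
  simp only [pd, fderiv_fun_mul hf hh, add_apply, smul_apply, smul_eq_mul]
  ring

lemma pd_exp (hf : DifferentiableAt ℝ f x) :
    pd i (fun y => Real.exp (f y)) x = Real.exp (f x) * pd i f x := by
  simp [pd, fderiv_exp hf]

lemma pd_sq (hf : DifferentiableAt ℝ f x) : pd i (fun y => f y ^ 2) x = 2 * f x * pd i f x := by
  simp only [sq, pd_mul hf hf]
  ring

lemma pd_sum {F : Fin 2 → E2 → ℝ} (hF : ∀ j, DifferentiableAt ℝ (F j) x) :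
    pd i (fun y => ∑ j, F j y) x = ∑ j, pd i (F j) x := by
  simp only [pd]
  rw [fderiv_fun_sum fun j _ => hF j]
  simp

lemma pd_gradSq (hf : ∀ j, DifferentiableAt ℝ (pd j f) x) :
    pd i (gradSq f) x = 2 * ∑ j, pd j f x * pd i (pd j f) x := by
  change pd i (fun y => ∑ j, pd j f y ^ 2) x = _
  rw [pd_sum (F := fun j y => pd j f y ^ 2) fun j => (hf j).pow 2, Finset.mul_sum]
  exact Finset.sum_congr rfl fun j _ => by rw [pd_sq (hf j)]; ring

lemma gradSq_exp (hf : DifferentiableAt ℝ f x) :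
    gradSq (fun y => Real.exp (f y)) x = Real.exp (f x) ^ 2 * gradSq f x := by
  simp only [gradSq, pd_exp hf, mul_pow, Finset.mul_sum]

lemma contDiff_gradSq (hf : ContDiff ℝ n f) (hmn : m + 1 ≤ n) : ContDiff ℝ m (gradSq f) :=
  ContDiff.sum fun _ _ => (contDiff_pd hf hmn).pow 2

lemma continuous_hessSq (hf : ContDiff ℝ 2 f) : Continuous (hessSq f) :=
  continuous_finsetSum _ fun i _ => continuous_finsetSum _ fun j _ =>
    (contDiff_pd (m := 0) (contDiff_pd (m := 1) hf (by norm_num)) (by norm_num)).continuous.pow 2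

lemma hasCompactSupport_gradSq (hf : HasCompactSupport f) : HasCompactSupport (gradSq f) :=
  hf.mono' fun x hx => by_contra fun hxf => hx <| by
    simp [gradSq, pd_eq_zero_of_notMem_tsupport hxf]

lemma hasCompactSupport_hessSq (hf : HasCompactSupport f) : HasCompactSupport (hessSq f) :=
  hf.mono' fun x hx => by_contra fun hxf => hx <| by
    simp [hessSq, pd_eq_zero_of_notMem_tsupport fun hmem => hxf (tsupport_pd_subset hmem)]

lemma integrable_pd (hf : ContDiff ℝ 1 f) (hfc : HasCompactSupport f) :
    Integrable (pd i f) :=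
  (contDiff_pd (m := 0) hf le_rfl).continuous.integrable_of_hasCompactSupport
    (hfc.fderiv_apply ℝ _)

lemma integral_pd_eq_zero (hf : ContDiff ℝ 1 f) (hfc : HasCompactSupport f) :
    ∫ x, pd i f x = 0 := by
  have := integral_mul_fderiv_eq_neg_fderiv_mul_of_integrable (f := fun _ => (1 : ℝ)) (g := f)
    (μ := volume) (v := EuclideanSpace.single i 1) (by simp)
    (by simp only [one_mul]; exact integrable_pd hf hfc)
    (by simpa using hf.continuous.integrable_of_hasCompactSupport hfc)
    (fun _ _ => differentiableAt_const _) (fun x _ => hf.differentiable one_ne_zero x)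
  simpa [pd] using this

lemma exp_mul_divergence_eq_sum_pd (hf : DifferentiableAt ℝ f x)
    (hf' : ∀ j, DifferentiableAt ℝ (pd j f) x) :
    Real.exp (f x) * (gradSq f x ^ 2 + lap f x * gradSq f x + 2 * hessGrad f x)
      = ∑ i, pd i (fun y => Real.exp (f y) * (pd i f y * gradSq f y)) x := by
  have hQ : DifferentiableAt ℝ (gradSq f) x :=
    DifferentiableAt.fun_sum fun j _ => (hf' j).pow 2
  have hpd (i : Fin 2) : pd i (fun y => Real.exp (f y) * (pd i f y * gradSq f y)) x
      = Real.exp (f x) * pd i f x * (pd i f x * gradSq f x)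
        + Real.exp (f x) * (pd i (pd i f) x * gradSq f x + pd i f x * pd i (gradSq f) x) := by
    rw [pd_mul (h := fun y => pd i f y * gradSq f y) hf.exp ((hf' i).mul hQ), pd_mul (hf' i) hQ,
      pd_exp hf]
  rw [Fin.sum_univ_two, hpd, hpd, pd_gradSq hf', pd_gradSq hf']
  simp only [lap, hessGrad, gradSq, Fin.sum_univ_two]
  ring

lemma lap_sq_le_two_mul_hessSq (f : E2 → ℝ) (x : E2) : lap f x ^ 2 ≤ 2 * hessSq f x := by
  simp only [lap, hessSq, Fin.sum_univ_two]
  nlinarith [sq_nonneg (pd 0 (pd 0 f) x - pd 1 (pd 1 f) x), sq_nonneg (pd 0 (pd 1 f) x),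
    sq_nonneg (pd 1 (pd 0 f) x)]

lemma hessGrad_sq_le_hessSq_mul_gradSq_sq (f : E2 → ℝ) (x : E2) :
    hessGrad f x ^ 2 ≤ hessSq f x * gradSq f x ^ 2 := by
  have := Finset.sum_mul_sq_le_sq_mul_sq Finset.univ (fun p : Fin 2 × Fin 2 => pd p.1 (pd p.2 f) x)
    (fun p => pd p.1 f x * pd p.2 f x)
  simp only [Fintype.sum_prod_type, Fin.sum_univ_two] at this
  simp only [hessGrad, hessSq, gradSq, Fin.sum_univ_two]
  linarith

lemma hessSq_nonneg (f : E2 → ℝ) (x : E2) : 0 ≤ hessSq f x :=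
  Finset.sum_nonneg fun _ _ => Finset.sum_nonneg fun _ _ => sq_nonneg _

lemma two_fifths_mul_gradSq_sq_le (f : E2 → ℝ) (x : E2) :
    2 / 5 * gradSq f x ^ 2
      ≤ gradSq f x ^ 2 + lap f x * gradSq f x + 2 * hessGrad f x + 5 * hessSq f x := by
  have hL := lap_sq_le_two_mul_hessSq f x
  have hH := hessGrad_sq_le_hessSq_mul_gradSq_sq f x
  set Q := gradSq f x
  set S := hessSq f x
  have hS : 0 ≤ S := hessSq_nonneg f x
  have hLQ : -(lap f x * Q) ≤ 5 / 2 * S + 1 / 5 * Q ^ 2 := by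
    nlinarith [sq_nonneg (lap f x + 2 / 5 * Q)]
  have hH2 : (2 * hessGrad f x) ^ 2 ≤ (5 / 2 * S + 2 / 5 * Q ^ 2) ^ 2 := by
    nlinarith [sq_nonneg (5 / 2 * S - 2 / 5 * Q ^ 2)]
  linarith [(abs_le_of_sq_le_sq' hH2 (by positivity)).1]

lemma integral_exp_mul_gradSq_sq_le {g : E2 → ℝ} (hg : ContDiff ℝ 2 g) (hgc : HasCompactSupport g) :
    ∫ x, Real.exp (g x) * gradSq g x ^ 2 ≤ 25 / 2 * ∫ x, Real.exp (g x) * hessSq g x := by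
  set V : Fin 2 → E2 → ℝ := fun i y => Real.exp (g y) * (pd i g y * gradSq g y)
  have hV (i : Fin 2) : ContDiff ℝ 1 (V i) :=
    (hg.exp.of_le (by norm_num)).mul ((contDiff_pd hg (by norm_num)).mul
      (contDiff_gradSq hg (by norm_num)))
  have hVc (i : Fin 2) : HasCompactSupport (V i) :=
    (hgc.fderiv_apply ℝ (EuclideanSpace.single i 1)).mul_right.mul_left
  set D := fun x => Real.exp (g x) * (gradSq g x ^ 2 + lap g x * gradSq g x + 2 * hessGrad g x)
  have hD : D = fun x => ∑ i, pd i (V i) x := funext fun x =>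
    exp_mul_divergence_eq_sum_pd (hg.differentiable (by norm_num) x)
      fun j => (contDiff_pd (m := 1) hg (by norm_num)).differentiable (by norm_num) x
  have hDint : Integrable D := hD ▸ integrable_finsetSum _ fun i _ => integrable_pd (hV i) (hVc i)
  have hD0 : ∫ x, D x = 0 := by
    rw [hD, integral_finsetSum _ fun i _ => integrable_pd (hV i) (hVc i)]
    exact Finset.sum_eq_zero fun i _ => integral_pd_eq_zero (hV i) (hVc i)
  have hA : Integrable fun x => Real.exp (g x) * gradSq g x ^ 2 := by
    have hQ2 : HasCompactSupport fun x => gradSq g x ^ 2 :=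
      (hasCompactSupport_gradSq hgc).comp_left (g := fun t : ℝ => t ^ 2) (zero_pow two_ne_zero)
    have hcont : Continuous fun x => Real.exp (g x) * gradSq g x ^ 2 :=
      hg.continuous.rexp.mul ((contDiff_gradSq (m := 0) hg (by norm_num)).continuous.pow 2)
    exact hcont.integrable_of_hasCompactSupport hQ2.mul_left
  have hB : Integrable fun x => Real.exp (g x) * hessSq g x :=
    (hg.continuous.rexp.mul (continuous_hessSq hg)).integrable_of_hasCompactSupport
      (hasCompactSupport_hessSq hgc).mul_left
  have : 2 / 5 * ∫ x, Real.exp (g x) * gradSq g x ^ 2 ≤ 5 * ∫ x, Real.exp (g x) * hessSq g x :=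
    calc 2 / 5 * ∫ x, Real.exp (g x) * gradSq g x ^ 2
        = ∫ x, 2 / 5 * (Real.exp (g x) * gradSq g x ^ 2) := (integral_const_mul _ _).symm
      _ ≤ ∫ x, (D x + 5 * (Real.exp (g x) * hessSq g x)) :=
        integral_mono (hA.const_mul _) (hDint.add (hB.const_mul 5)) fun x => by
          have := mul_le_mul_of_nonneg_left (two_fifths_mul_gradSq_sq_le g x) (exp_pos (g x)).le
          simp only [D]
          linarith
      _ = 5 * ∫ x, Real.exp (g x) * hessSq g x := by
        rw [integral_add hDint (hB.const_mul 5), hD0, zero_add, integral_const_mul]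
  linarith

end

/-- Inequality (3.11): for `c = exp ∘ g` with `g` smooth and compactly supported,
`∫ c⁻³ |∇c|⁴ ≤ 25 ∫ c |D²(ln c)|²`. -/
theorem stmt8 (g : E2 → ℝ) (hg : ContDiff ℝ (⊤ : ℕ∞) g) (hgc : HasCompactSupport g)
    (c : E2 → ℝ) (hc : c = fun x => Real.exp (g x)) :
    ∫ x : E2, (gradSq c x) ^ 2 / (c x) ^ 3
      ≤ 25 * ∫ x : E2, c x * hessSq (fun y => Real.log (c y)) x := by
  subst hc
  have hA (x : E2) : gradSq (fun y => Real.exp (g y)) x ^ 2 / Real.exp (g x) ^ 3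
      = Real.exp (g x) * gradSq g x ^ 2 := by
    rw [gradSq_exp (hg.differentiable (by simp) x), div_eq_iff (by positivity)]
    ring
  have hB : 0 ≤ ∫ x, Real.exp (g x) * hessSq g x :=
    integral_nonneg fun x => mul_nonneg (exp_pos _).le (hessSq_nonneg g x)
  simp only [hA, Real.log_exp]
  linarith [integral_exp_mul_gradSq_sq_le (hg.of_le (WithTop.coe_le_coe.2 le_top)) hgc]
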